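/- For 0 < α < 1, the function ω(z) = (1-z)/(τ(1 - α/2 + (α/2)z)^{1/α}) satisfies ω(e^{-sτ}) = s + O(τ²|s|³) as sτ → 0; precisely, there exist r > 0 and C > 0 such that |ω(e^{-sτ}) - s| ≤ C τ² |s|³ for all complex s with |sτ| ≤ r. -/

import Mathlib

/-!
With `w = sτ`, the quantity `τ ω(e^{-w})` is `g w = u w * v w` where `u w = 1 - e^{-w}` and
`v w = (1 - α/2 + (α/2) e^{-w})^{-1/α}`. Near `w = 0` the base of the power is close to `1`, off
the branch cut, so `g` is analytic at `0`. Since `u 0 = 0`, `u' 0 = 1`, `u'' 0 = -1`, `v 0 = 1` and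
`v' 0 = 1/2`, Leibniz' rule gives `g 0 = 0`, `g' 0 = 1` and `g'' 0 = -1 + 2 · (1/2) = 0`. Taylor's
theorem for analytic functions then gives `g w - w = O(w³)`, and dividing by `τ` yields the bound.
-/

open Complex Filter Topology Asymptotics

theorem AnalyticAt.isBigO_sub_taylor {𝕜 E : Type*} [NontriviallyNormedField 𝕜] [CharZero 𝕜]
    [NormedAddCommGroup E] [NormedSpace 𝕜 E] [CompleteSpace E] {f : 𝕜 → E}
    (hf : AnalyticAt 𝕜 f 0) (n : ℕ) :
    (fun z ↦ f z - ∑ i ∈ Finset.range n, (z ^ i / i.factorial) • iteratedDeriv i f 0)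
      =O[𝓝 0] (· ^ n) := by
  obtain ⟨F, hF, hfF⟩ := hf.exists_eventuallyEq_sum_add_pow_mul n
  have hrem : (fun z ↦ z ^ n • F z) =O[𝓝 0] (· ^ n) := by
    simpa using (isBigO_refl (· ^ n) (𝓝 (0 : 𝕜))).smul (hF.continuousAt.tendsto.isBigO_one 𝕜)
  refine hrem.congr' ?_ EventuallyEq.rfl
  filter_upwards [hfF] with z hz
  rw [hz, add_sub_cancel_left]

theorem Asymptotics.IsBigO.exists_pos_norm_le_of_nhds {E F F' : Type*} [PseudoMetricSpace E]
    [Norm F] [SeminormedAddCommGroup F'] {f : E → F} {g : E → F'} {x : E} (h : f =O[𝓝 x] g) :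
    ∃ r : ℝ, 0 < r ∧ ∃ C : ℝ, 0 < C ∧ ∀ y, dist y x ≤ r → ‖f y‖ ≤ C * ‖g y‖ := by
  obtain ⟨C, hC, hfg⟩ := h.exists_pos
  obtain ⟨ε, hε, hball⟩ := Metric.eventually_nhds_iff.1 hfg.bound
  exact ⟨ε / 2, half_pos hε, C, hC, fun y hy ↦ hball (by linarith)⟩

noncomputable def cnDenom (α : ℝ) (w : ℂ) : ℂ := 1 - α / 2 + α / 2 * cexp (-w)

/-- `cnSymbol α (s * τ) = τ * ω (exp (-s * τ))`. -/
noncomputable def cnSymbol (α : ℝ) (w : ℂ) : ℂ := (1 - cexp (-w)) * cnDenom α w ^ (-(α : ℂ)⁻¹)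

section

variable (α : ℝ)

@[simp] lemma cnDenom_zero : cnDenom α 0 = 1 := by simp [cnDenom]

lemma analyticAt_cnDenom_cpow (c : ℂ) : AnalyticAt ℂ (fun w ↦ cnDenom α w ^ c) 0 := by
  refine AnalyticAt.cpow (by unfold cnDenom; fun_prop) analyticAt_const ?_
  simp [one_mem_slitPlane]

lemma analyticAt_cnSymbol : AnalyticAt ℂ (cnSymbol α) 0 :=
  (by fun_prop : AnalyticAt ℂ (fun w ↦ 1 - cexp (-w)) 0).mul (analyticAt_cnDenom_cpow α _)

lemma deriv_cexp_neg : deriv (fun w ↦ cexp (-w)) = fun w ↦ -cexp (-w) := by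
  ext w; simpa using ((hasDerivAt_neg w).cexp).deriv

lemma deriv_cnDenom_cpow_zero (hα : α ≠ 0) :
    deriv (fun w ↦ cnDenom α w ^ (-(α : ℂ)⁻¹)) 0 = 1 / 2 := by
  have hB : HasDerivAt (cnDenom α) (-(α / 2)) 0 := by
    unfold cnDenom
    simpa using (((hasDerivAt_neg (0 : ℂ)).cexp).const_mul ((α : ℂ) / 2)).const_add
      (1 - (α : ℂ) / 2)
  rw [(hB.cpow_const (by simp [one_mem_slitPlane])).deriv]
  field_simp
  simpa using hα

lemma iteratedDeriv_cnSymbol_zero (hα : α ≠ 0) {i : ℕ} (hi : i < 3) :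
    iteratedDeriv i (cnSymbol α) 0 = if i = 1 then 1 else 0 := by
  have hu := (by fun_prop : AnalyticAt ℂ (fun w ↦ 1 - cexp (-w)) 0).contDiffAt (n := i)
  have hv := (analyticAt_cnDenom_cpow α (-(α : ℂ)⁻¹)).contDiffAt (n := i)
  unfold cnSymbol
  rw [iteratedDeriv_fun_mul hu hv]
  interval_cases i <;>
    simp [Finset.sum_range_succ, iteratedDeriv_succ, deriv_cexp_neg, deriv_cnDenom_cpow_zero α hα]

lemma cnSymbol_sub_self_isBigO (hα : α ≠ 0) : (fun w ↦ cnSymbol α w - w) =O[𝓝 0] (· ^ 3) := by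
  simpa [Finset.sum_range_succ, iteratedDeriv_cnSymbol_zero α hα] using
    (analyticAt_cnSymbol α).isBigO_sub_taylor 3

lemma generatingFunction_sub_eq_cnSymbol_sub_div {τ : ℝ} (hτ : τ ≠ 0) (s : ℂ) :
    (1 - cexp (-s * τ)) / ((τ : ℂ) * ((1 - α / 2 + (α / 2) * cexp (-s * τ)) ^ ((1 : ℂ) / α))) - s
      = (cnSymbol α (s * τ) - s * τ) / τ := by
  simp only [cnSymbol, cnDenom, cpow_neg, one_div, neg_mul]
  rw [sub_div _ (s * τ), mul_div_cancel_right₀ _ (ofReal_ne_zero.2 hτ)]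
  ring

end

theorem stmt_6_general (α : ℝ) (hα : 0 < α) :
    ∃ r : ℝ, 0 < r ∧ ∃ C : ℝ, 0 < C ∧ ∀ (τ : ℝ), 0 < τ → ∀ s : ℂ, ‖s * τ‖ ≤ r →
      ‖(1 - Complex.exp (-s * τ)) /
          ((τ : ℂ) * ((1 - α / 2 + (α / 2) * Complex.exp (-s * τ)) ^ ((1 : ℂ) / α)))
        - s‖ ≤ C * τ ^ 2 * ‖s‖ ^ 3 := by
  obtain ⟨r, hr, C, hC, hbound⟩ := (cnSymbol_sub_self_isBigO α hα.ne').exists_pos_norm_le_of_nhds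
  refine ⟨r, hr, C, hC, fun τ hτ s hs ↦ ?_⟩
  rw [generatingFunction_sub_eq_cnSymbol_sub_div α hτ.ne' s, norm_div, norm_real,
    Real.norm_of_nonneg hτ.le, div_le_iff₀ hτ]
  calc ‖cnSymbol α (s * τ) - s * τ‖ ≤ C * ‖s * τ‖ ^ 3 := by
        simpa using hbound (s * τ) (by rwa [dist_zero_right])
    _ = C * τ ^ 2 * ‖s‖ ^ 3 * τ := by
      rw [norm_mul, norm_real, Real.norm_of_nonneg hτ.le]; ring

/-- The fractional Crank–Nicolson generating function
`ω(z) = (1-z)/(τ(1 - α/2 + (α/2)z)^{1/α})` satisfies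
`|ω(e^{-sτ}) - s| ≤ Cτ²|s|³` for `|sτ| ≤ r`. -/
theorem stmt_6 (α : ℝ) (hα : 0 < α) (hα1 : α < 1) :
    ∃ r : ℝ, 0 < r ∧ ∃ C : ℝ, 0 < C ∧ ∀ (τ : ℝ), 0 < τ → ∀ s : ℂ, ‖s * τ‖ ≤ r →
      ‖(1 - Complex.exp (-s * τ)) /
          ((τ : ℂ) * ((1 - α / 2 + (α / 2) * Complex.exp (-s * τ)) ^ ((1 : ℂ) / α)))
        - s‖ ≤ C * τ ^ 2 * ‖s‖ ^ 3 :=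
  stmt_6_general α hα
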